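/- The entire function Z₁(s) has no zero in the right half-plane Re(s) ≥ 20; that is, for every complex s with Re(s) ≥ 20 one has Z₁(s) ≠ 0. -/

import Mathlib

/-
For `Re s ≥ 20` the term `χ(2s) (s-1)² (3s-2) (As-A+1) χ(s+1) χ(3s)` of `Z₁(s)` dominates the
other five terms obtained by expanding `f₁(s)` and `f₁(1-s)` (the latter rewritten with
`χ(1-w) = χ(w)`). The reason is that `χ` grows fast to the right: `|χ(w)| ≤ 0.6 |χ(w+1)|` for
`Re w ≥ 19`. Writing `χ(w) = w(w-1) Γℝ(w) ζ(w)`, this follows from `ζ(w) ≈ 1` and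
`|Γ(z)| √(Re z - 1/2) ≤ |Γ(z + 1/2)|`, which comes from `|B(z, 1/2)| ≤ B(Re z, 1/2)` and the
log-convexity of the real Gamma function.
-/

open Complex

noncomputable def chi (s : ℂ) : ℂ := s * (s - 1) * completedRiemannZeta₀ s + 1

noncomputable def A : ℂ := Real.pi / 3 - 1

noncomputable def f1 (s : ℂ) : ℂ :=
  (s - 1) * ((s - 1) * (3 * s - 2) * (A * s - A + 1) * chi (s + 1) * chi (3 * s)
    - (s + 1) * (s - 2) * chi s * chi (3 * s - 1)
    - 2 * (s - 1) * (s - 2) * chi s * chi (3 * s))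

noncomputable def f2 (s : ℂ) : ℂ :=
  (s - 2) * ((A * s + 3) * (s - 1) ^ 2 * chi (s + 2)
    - 2 * (s - 1) * (s - 3) * chi (s + 1)
    - (s + 2) * (s - 3) * chi s)

noncomputable def Z1 (s : ℂ) : ℂ := chi (2 * s) * f1 s - chi (2 * s - 1) * f1 (1 - s)

noncomputable def Z2 (s : ℂ) : ℂ := chi (2 * s) * f2 s - chi (2 * s - 1) * f2 (1 - s)

theorem norm_le_mul_norm_of_normSq_le {z w : ℂ} {c : ℝ} (hc : 0 ≤ c)
    (h : normSq z ≤ c ^ 2 * normSq w) : ‖z‖ ≤ c * ‖w‖ := by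
  rw [← sq_le_sq₀ (norm_nonneg _) (by positivity), mul_pow, Complex.sq_norm, Complex.sq_norm]
  exact h

theorem norm_riemannZeta_sub_one_le {w : ℂ} (hw : 2 ≤ w.re) :
    ‖riemannZeta w - 1‖ ≤ 2 ^ (2 - w.re) * (Real.pi ^ 2 / 6 - 1) := by
  have hw1 : 1 < w.re := by linarith
  have hζ : HasSum (fun n : ℕ => 1 / (n : ℂ) ^ w) (riemannZeta w) := by
    rw [zeta_eq_tsum_one_div_nat_cpow hw1]
    exact (Complex.summable_one_div_nat_cpow.mpr hw1).hasSum
  have htail := (hasSum_nat_add_iff' 2).mpr hζ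
  have hsq := (hasSum_nat_add_iff' 2).mpr hasSum_zeta_two
  simp only [Nat.cast_add, Nat.cast_ofNat, one_div, Finset.sum_range_succ, Finset.range_one,
    Finset.sum_singleton, CharP.cast_eq_zero, zero_cpow (Complex.ne_zero_of_one_lt_re hw1),
    inv_zero, Nat.cast_one, one_cpow, inv_one, zero_add, ne_eq, OfNat.ofNat_ne_zero,
    not_false_eq_true, zero_pow, one_pow] at htail hsq
  rw [← htail.tsum_eq]
  refine tsum_of_norm_bounded (hsq.mul_left (2 ^ (2 - w.re))) fun n => ?_
  have hn : (2 : ℝ) ≤ n + 2 := by linarith [n.cast_nonneg (α := ℝ)]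
  have hpos : (0 : ℝ) < n + 2 := by linarith
  calc ‖((n + 2 : ℂ) ^ w)⁻¹‖ = ((n : ℝ) + 2) ^ (2 - w.re) * (((n : ℝ) + 2) ^ 2)⁻¹ := by
        rw [norm_inv, show (n : ℂ) + 2 = ((n + 2 : ℝ) : ℂ) by push_cast; rfl,
          norm_cpow_eq_rpow_re_of_pos hpos, ← Real.rpow_natCast, ← Real.rpow_neg hpos.le,
          ← Real.rpow_neg hpos.le, ← Real.rpow_add hpos]
        ring_nf
    _ ≤ 2 ^ (2 - w.re) * (((n : ℝ) + 2) ^ 2)⁻¹ := by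
        gcongr ?_ * _
        exact Real.rpow_le_rpow_of_nonpos two_pos hn (by linarith)

theorem norm_riemannZeta_sub_one_le_of_nineteen_le_re {w : ℂ} (hw : 19 ≤ w.re) :
    ‖riemannZeta w - 1‖ ≤ 1 / 200 := by
  have h2 : (2 : ℝ) ^ (2 - w.re) ≤ 2 ^ (-17 : ℝ) :=
    Real.rpow_le_rpow_of_exponent_le (by norm_num) (by linarith)
  have hπ : Real.pi ^ 2 / 6 - 1 ≤ 1 := by nlinarith [Real.pi_lt_d2, Real.pi_pos]
  calc ‖riemannZeta w - 1‖ ≤ 2 ^ (2 - w.re) * (Real.pi ^ 2 / 6 - 1) :=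
        norm_riemannZeta_sub_one_le (by linarith)
    _ ≤ 2 ^ (-17 : ℝ) * 1 := by gcongr; nlinarith [Real.pi_gt_three]
    _ ≤ 1 / 200 := by norm_num [Real.rpow_neg]

theorem norm_ofReal_cpow_le {t : ℝ} (ht : 0 ≤ t) (w : ℂ) : ‖(t : ℂ) ^ w‖ ≤ t ^ w.re := by
  simpa [arg_ofReal_of_nonneg ht, abs_of_nonneg ht] using norm_cpow_le (t : ℂ) w

theorem norm_betaIntegral_le {u v : ℂ} (hu : 0 < u.re) (hv : 0 < v.re) :
    ‖betaIntegral u v‖ ≤ (betaIntegral u.re v.re).re := by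
  have hconv := betaIntegral_convergent (u := u.re) (v := v.re) (by simpa) (by simpa)
  rw [betaIntegral, betaIntegral, ← reCLM_apply,
    ← ContinuousLinearMap.intervalIntegral_comp_comm reCLM hconv]
  refine (intervalIntegral.norm_integral_le_integral_norm zero_le_one).trans
    (intervalIntegral.integral_mono_on zero_le_one (betaIntegral_convergent hu hv).norm
      ⟨hconv.1.re, hconv.2.re⟩ fun t ⟨ht0, ht1⟩ => ?_)
  have h1t : 0 ≤ 1 - t := by linarith
  have hre : reCLM ((t : ℂ) ^ ((u.re : ℂ) - 1) * (1 - (t : ℂ)) ^ ((v.re : ℂ) - 1))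
      = t ^ (u.re - 1) * (1 - t) ^ (v.re - 1) := by
    rw [reCLM_apply, ← ofReal_one, ← ofReal_sub, ← ofReal_sub, ← ofReal_sub, ← ofReal_cpow ht0,
      ← ofReal_cpow h1t, ← ofReal_mul, ofReal_re]
  rw [hre, norm_mul, show (1 : ℂ) - t = ((1 - t : ℝ) : ℂ) by push_cast; rfl]
  exact mul_le_mul (by simpa using norm_ofReal_cpow_le ht0 (u - 1))
    (by simpa using norm_ofReal_cpow_le h1t (v - 1)) (norm_nonneg _) (by positivity)

theorem norm_Gamma_mul_Gamma_re_add_le {z : ℂ} {a : ℝ} (hz : 0 < z.re) (ha : 0 < a) :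
    ‖Gamma z‖ * Real.Gamma (z.re + a) ≤ Real.Gamma z.re * ‖Gamma (z + a)‖ := by
  have hΓa := Real.Gamma_pos_of_pos ha
  have hΓxa := Real.Gamma_pos_of_pos (add_pos hz ha)
  have hz_beta := congrArg norm (Gamma_mul_Gamma_eq_betaIntegral hz (by simpa : 0 < (a : ℂ).re))
  rw [norm_mul, norm_mul, Gamma_ofReal, norm_real, Real.norm_of_nonneg hΓa.le] at hz_beta
  have hx_beta := ProbabilityTheory.beta_eq_betaIntegralReal z.re a hz ha
  rw [ProbabilityTheory.beta, eq_comm, eq_div_iff hΓxa.ne'] at hx_beta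
  have hB := norm_betaIntegral_le hz (by simpa : 0 < (a : ℂ).re)
  rw [ofReal_re] at hB
  refine le_of_mul_le_mul_right ?_ hΓa
  calc ‖Gamma z‖ * Real.Gamma (z.re + a) * Real.Gamma a
      = ‖Gamma (z + a)‖ * ‖betaIntegral z a‖ * Real.Gamma (z.re + a) := by
        rw [← hz_beta]; ring
    _ ≤ ‖Gamma (z + a)‖ * (betaIntegral z.re a).re * Real.Gamma (z.re + a) := by gcongr
    _ = Real.Gamma z.re * ‖Gamma (z + a)‖ * Real.Gamma a := by
        linear_combination ‖Gamma (z + a)‖ * hx_beta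

theorem Real.Gamma_mul_sqrt_le_Gamma_add_half {x : ℝ} (hx : 1 / 2 < x) :
    Real.Gamma x * √(x - 1 / 2) ≤ Real.Gamma (x + 1 / 2) := by
  have hpos : 0 < x - 1 / 2 := by linarith
  have hΓlo := Real.Gamma_pos_of_pos hpos
  have hΓhi := Real.Gamma_pos_of_pos (by linarith : 0 < x + 1 / 2)
  have hrec : Real.Gamma (x + 1 / 2) = (x - 1 / 2) * Real.Gamma (x - 1 / 2) := by
    rw [← Real.Gamma_add_one hpos.ne']; ring_nf
  have hconv : Real.Gamma x ≤ √(Real.Gamma (x - 1 / 2)) * √(Real.Gamma (x + 1 / 2)) := by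
    have := Real.Gamma_mul_add_mul_le_rpow_Gamma_mul_rpow_Gamma hpos (by linarith : 0 < x + 1 / 2)
      (by norm_num : (0 : ℝ) < 1 / 2) (by norm_num : (0 : ℝ) < 1 / 2) (by norm_num)
    rwa [← Real.sqrt_eq_rpow, ← Real.sqrt_eq_rpow,
      show 1 / 2 * (x - 1 / 2) + 1 / 2 * (x + 1 / 2) = x by ring] at this
  calc Real.Gamma x * √(x - 1 / 2)
      ≤ √(Real.Gamma (x - 1 / 2)) * √(Real.Gamma (x + 1 / 2)) * √(x - 1 / 2) := by gcongr
    _ = √(Real.Gamma (x + 1 / 2) * Real.Gamma (x + 1 / 2)) := by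
        rw [← Real.sqrt_mul hΓlo.le, ← Real.sqrt_mul (by positivity)]
        congr 1; rw [hrec]; ring
    _ = Real.Gamma (x + 1 / 2) := Real.sqrt_mul_self hΓhi.le

theorem norm_Gamma_mul_sqrt_le {z : ℂ} (hz : 1 / 2 < z.re) :
    ‖Gamma z‖ * √(z.re - 1 / 2) ≤ ‖Gamma (z + 1 / 2)‖ := by
  have hΓx := Real.Gamma_pos_of_pos (by linarith : 0 < z.re)
  have hratio := norm_Gamma_mul_Gamma_re_add_le (by linarith) (by norm_num : (0 : ℝ) < 1 / 2)
  push_cast at hratio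
  refine le_of_mul_le_mul_left ?_ hΓx
  calc Real.Gamma z.re * (‖Gamma z‖ * √(z.re - 1 / 2))
      = ‖Gamma z‖ * (Real.Gamma z.re * √(z.re - 1 / 2)) := by ring
    _ ≤ ‖Gamma z‖ * Real.Gamma (z.re + 1 / 2) := by
        gcongr; exact Real.Gamma_mul_sqrt_le_Gamma_add_half hz
    _ ≤ Real.Gamma z.re * ‖Gamma (z + 1 / 2)‖ := hratio

theorem norm_Gammaℝ_mul_sqrt_le {w : ℂ} (hw : 1 < w.re) :
    ‖Gammaℝ w‖ * √((w.re - 1) / 2) ≤ √Real.pi * ‖Gammaℝ (w + 1)‖ := by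
  have hΓ := norm_Gamma_mul_sqrt_le (z := w / 2) (by simp; linarith)
  rw [show w / 2 + 1 / 2 = (w + 1) / 2 by ring,
    show (w / 2).re - 1 / 2 = (w.re - 1) / 2 by simp; ring] at hΓ
  have hπ : √Real.pi * Real.pi ^ (-(w.re + 1) / 2) = Real.pi ^ (-w.re / 2) := by
    rw [Real.sqrt_eq_rpow, ← Real.rpow_add Real.pi_pos]; ring_nf
  simp only [Gammaℝ_def, norm_mul, norm_cpow_eq_rpow_re_of_pos Real.pi_pos]
  have hre : ∀ u : ℂ, (-u / 2).re = -u.re / 2 := fun u => by simp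
  rw [hre, hre, add_re, one_re, ← mul_assoc, hπ, mul_assoc]
  gcongr

theorem completedRiemannZeta_eq_Gammaℝ_mul {w : ℂ} (hw : 0 < w.re) :
    completedRiemannZeta w = Gammaℝ w * riemannZeta w := by
  rw [riemannZeta_def_of_ne_zero (ne_zero_of_re_pos hw),
    mul_div_cancel₀ _ (Gammaℝ_ne_zero_of_re_pos hw)]

theorem chi_eq_mul_completedRiemannZeta {w : ℂ} (h0 : w ≠ 0) (h1 : w ≠ 1) :
    chi w = w * (w - 1) * completedRiemannZeta w := by
  rw [chi, completedRiemannZeta_eq]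
  field_simp [sub_ne_zero.mpr h1, sub_ne_zero.mpr h1.symm]
  ring

theorem chi_eq_of_one_lt_re {w : ℂ} (hw : 1 < w.re) :
    chi w = w * (w - 1) * (Gammaℝ w * riemannZeta w) := by
  rw [chi_eq_mul_completedRiemannZeta (ne_zero_of_re_pos (by linarith)) (by rintro rfl; simp at hw),
    completedRiemannZeta_eq_Gammaℝ_mul (by linarith)]

theorem chi_one_sub (w : ℂ) : chi (1 - w) = chi w := by
  simp only [chi, completedRiemannZeta₀_one_sub]
  ring

theorem chi_ne_zero_of_one_lt_re {w : ℂ} (hw : 1 < w.re) : chi w ≠ 0 := by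
  rw [chi_eq_of_one_lt_re hw]
  have h0 : w ≠ 0 := ne_zero_of_re_pos (by linarith)
  have h1 : w - 1 ≠ 0 := sub_ne_zero.mpr (by rintro rfl; simp at hw)
  exact mul_ne_zero (mul_ne_zero h0 h1)
    (mul_ne_zero (Gammaℝ_ne_zero_of_re_pos (by linarith)) (riemannZeta_ne_zero_of_one_lt_re hw))

theorem norm_chi_le_norm_chi_add_one {w : ℂ} (hw : 19 ≤ w.re) : ‖chi w‖ ≤ 0.6 * ‖chi (w + 1)‖ := by
  have hw1 : (1 : ℝ) < (w + 1).re := by simp; linarith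
  rw [chi_eq_of_one_lt_re (by linarith), chi_eq_of_one_lt_re hw1, add_sub_cancel_right]
  simp only [norm_mul]
  have hsub : ‖w - 1‖ ≤ ‖w + 1‖ := by
    simpa using norm_le_mul_norm_of_normSq_le (c := 1) (z := w - 1) (w := w + 1) zero_le_one
      (by simp [normSq_apply]; nlinarith)
  have hζ : ‖riemannZeta w‖ ≤ 1.005 := by
    have := norm_le_norm_add_norm_sub' (riemannZeta w) 1
    linarith [norm_one (α := ℂ), norm_riemannZeta_sub_one_le_of_nineteen_le_re hw]
  have hζ1 : 0.995 ≤ ‖riemannZeta (w + 1)‖ := by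
    have := norm_le_norm_add_norm_sub' 1 (riemannZeta (w + 1))
    rw [norm_sub_rev] at this
    linarith [norm_one (α := ℂ),
      norm_riemannZeta_sub_one_le_of_nineteen_le_re (w := w + 1) (by simp; linarith)]
  -- `√π / 3 ≈ 0.591`, which leaves room for the factor `1.005 / 0.995` from `ζ`.
  have hsqrt : 3 ≤ √((w.re - 1) / 2) := Real.le_sqrt_of_sq_le (by linarith)
  have hπ : √Real.pi ≤ 1.7725 := Real.sqrt_le_iff.mpr ⟨by norm_num, by nlinarith [Real.pi_lt_d6]⟩
  have hΓ : ‖Gammaℝ w‖ * 3 ≤ 1.7725 * ‖Gammaℝ (w + 1)‖ :=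
    calc ‖Gammaℝ w‖ * 3 ≤ ‖Gammaℝ w‖ * √((w.re - 1) / 2) := by gcongr
      _ ≤ √Real.pi * ‖Gammaℝ (w + 1)‖ := norm_Gammaℝ_mul_sqrt_le (by linarith)
      _ ≤ 1.7725 * ‖Gammaℝ (w + 1)‖ := by gcongr
  calc ‖w‖ * ‖w - 1‖ * (‖Gammaℝ w‖ * ‖riemannZeta w‖)
      ≤ ‖w‖ * ‖w + 1‖ * ((1.7725 / 3 * ‖Gammaℝ (w + 1)‖) * 1.005) := by
        gcongr; linarith
    _ ≤ ‖w‖ * ‖w + 1‖ * (0.6 * (‖Gammaℝ (w + 1)‖ * 0.995)) := by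
        gcongr ‖w‖ * ‖w + 1‖ * ?_; nlinarith [norm_nonneg (Gammaℝ (w + 1))]
    _ = 0.6 * (‖w + 1‖ * ‖w‖ * (‖Gammaℝ (w + 1)‖ * 0.995)) := by ring
    _ ≤ 0.6 * (‖w + 1‖ * ‖w‖ * (‖Gammaℝ (w + 1)‖ * ‖riemannZeta (w + 1)‖)) := by gcongr

theorem norm_chi_le_norm_chi_add_two {w : ℂ} (hw : 19 ≤ w.re) : ‖chi w‖ ≤ 0.36 * ‖chi (w + 2)‖ :=
  calc ‖chi w‖ ≤ 0.6 * ‖chi (w + 1)‖ := norm_chi_le_norm_chi_add_one hw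
    _ ≤ 0.6 * (0.6 * ‖chi (w + 1 + 1)‖) := by
        gcongr; exact norm_chi_le_norm_chi_add_one (by simp; linarith)
    _ = 0.36 * ‖chi (w + 2)‖ := by ring_nf

theorem norm_le_mul_norm_sub_one {s : ℂ} (hs : 20 ≤ s.re) : ‖s‖ ≤ 1.1 * ‖s - 1‖ :=
  norm_le_mul_norm_of_normSq_le (by norm_num) (by simp [normSq_apply]; nlinarith)

theorem A_re : A.re = Real.pi / 3 - 1 := by simp [A]

theorem A_im : A.im = 0 := by simp [A]

theorem le_norm_A_mul_sub_add_one {s : ℂ} (hs : 20 ≤ s.re) : 1.89 ≤ ‖A * s - A + 1‖ := by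
  refine le_trans ?_ (re_le_norm _)
  simp [A_re, A_im]
  nlinarith [Real.pi_gt_d6]

theorem norm_one_sub_A_mul_le {s : ℂ} (hs : 20 ≤ s.re) :
    ‖1 - A * s‖ ≤ 2.06 * ‖A * s - A + 1‖ := by
  have h2A : ‖2 - A‖ ≤ 2 := by
    rw [show (2 : ℂ) - A = ((3 - Real.pi / 3 : ℝ) : ℂ) by simp [A]; ring, norm_real,
      Real.norm_of_nonneg (by linarith [Real.pi_lt_d2])]
    linarith [Real.pi_gt_three]
  calc ‖1 - A * s‖ = ‖(2 - A) - (A * s - A + 1)‖ := by ring_nf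
    _ ≤ ‖2 - A‖ + ‖A * s - A + 1‖ := norm_sub_le _ _
    _ ≤ 2.06 * ‖A * s - A + 1‖ := by linarith [le_norm_A_mul_sub_add_one hs]

noncomputable def f1Term₁ (s : ℂ) : ℂ :=
  (s - 1) * (3 * s - 2) * (A * s - A + 1) * chi (s + 1) * chi (3 * s)

noncomputable def f1Term₂ (s : ℂ) : ℂ := (s + 1) * (s - 2) * chi s * chi (3 * s - 1)

noncomputable def f1Term₃ (s : ℂ) : ℂ := 2 * (s - 1) * (s - 2) * chi s * chi (3 * s)

theorem f1_eq (s : ℂ) : f1 s = (s - 1) * (f1Term₁ s - f1Term₂ s - f1Term₃ s) := rfl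

theorem f1Term₁_one_sub (s : ℂ) :
    f1Term₁ (1 - s) = s * (3 * s - 1) * (1 - A * s) * chi (s - 1) * chi (3 * s - 2) := by
  rw [f1Term₁, show 1 - s + 1 = 1 - (s - 1) by ring, show 3 * (1 - s) = 1 - (3 * s - 2) by ring,
    chi_one_sub, chi_one_sub]
  ring

theorem f1Term₂_one_sub (s : ℂ) : f1Term₂ (1 - s) = f1Term₂ s := by
  rw [f1Term₂, f1Term₂, show 3 * (1 - s) - 1 = 1 - (3 * s - 1) by ring, chi_one_sub, chi_one_sub]
  ring

theorem f1Term₃_one_sub (s : ℂ) :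
    f1Term₃ (1 - s) = 2 * s * (s + 1) * chi s * chi (3 * s - 2) := by
  rw [f1Term₃, show 3 * (1 - s) = 1 - (3 * s - 2) by ring, chi_one_sub, chi_one_sub]
  ring

theorem f1Term₁_ne_zero {s : ℂ} (hs : 20 ≤ s.re) : f1Term₁ s ≠ 0 := by
  have h₁ : s - 1 ≠ 0 := fun h => by simp [sub_eq_zero.mp h] at hs
  have h₂ : 3 * s - 2 ≠ 0 := fun h => by
    have := congrArg re h
    simp at this
    linarith
  have h₃ : A * s - A + 1 ≠ 0 := norm_pos_iff.mp (by linarith [le_norm_A_mul_sub_add_one hs])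
  have h₄ := chi_ne_zero_of_one_lt_re (w := s + 1) (by simp; linarith)
  have h₅ := chi_ne_zero_of_one_lt_re (w := 3 * s) (by simp; linarith)
  simp only [f1Term₁]
  exact mul_ne_zero (mul_ne_zero (mul_ne_zero (mul_ne_zero h₁ h₂) h₃) h₄) h₅

theorem Z1_eq (s : ℂ) :
    Z1 s = chi (2 * s) * (s - 1) * (f1Term₁ s - (f1Term₂ s + f1Term₃ s))
      + chi (2 * s - 1) * s * (f1Term₁ (1 - s) - f1Term₂ (1 - s) - f1Term₃ (1 - s)) := by
  rw [Z1, f1_eq, f1_eq]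
  ring

theorem norm_f1Term₂_le {s : ℂ} (hs : 20 ≤ s.re) : ‖f1Term₂ s‖ ≤ 0.1 * ‖f1Term₁ s‖ := by
  have h₁ : ‖s + 1‖ ≤ 0.4 * ‖3 * s - 2‖ :=
    norm_le_mul_norm_of_normSq_le (by norm_num) (by simp [normSq_apply]; nlinarith)
  have h₂ : ‖s - 2‖ ≤ ‖s - 1‖ := by
    simpa using norm_le_mul_norm_of_normSq_le (c := 1) (z := s - 2) (w := s - 1) (by norm_num)
      (by simp [normSq_apply]; nlinarith)
  have h₃ := norm_chi_le_norm_chi_add_one (w := s) (by linarith)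
  have h₄ : ‖chi (3 * s - 1)‖ ≤ 0.6 * ‖chi (3 * s)‖ := by
    simpa using norm_chi_le_norm_chi_add_one (w := 3 * s - 1) (by simp; linarith)
  have hA := le_norm_A_mul_sub_add_one hs
  simp only [f1Term₁, f1Term₂, norm_mul]
  calc ‖s + 1‖ * ‖s - 2‖ * ‖chi s‖ * ‖chi (3 * s - 1)‖
      ≤ 0.4 * ‖3 * s - 2‖ * ‖s - 1‖ * (0.6 * ‖chi (s + 1)‖) * (0.6 * ‖chi (3 * s)‖) := by
        gcongr
    _ = 0.1 * (‖s - 1‖ * ‖3 * s - 2‖ * 1.44 * ‖chi (s + 1)‖ * ‖chi (3 * s)‖) := by ring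
    _ ≤ 0.1 * (‖s - 1‖ * ‖3 * s - 2‖ * ‖A * s - A + 1‖ * ‖chi (s + 1)‖ * ‖chi (3 * s)‖) := by
        gcongr; linarith

theorem norm_f1Term₃_le {s : ℂ} (hs : 20 ≤ s.re) : ‖f1Term₃ s‖ ≤ 0.25 * ‖f1Term₁ s‖ := by
  have h₁ : ‖s - 2‖ ≤ 1 / 3 * ‖3 * s - 2‖ :=
    norm_le_mul_norm_of_normSq_le (by norm_num) (by simp [normSq_apply]; nlinarith)
  have h₂ := norm_chi_le_norm_chi_add_one (w := s) (by linarith)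
  have hA := le_norm_A_mul_sub_add_one hs
  simp only [f1Term₁, f1Term₃, norm_mul]
  calc ‖(2 : ℂ)‖ * ‖s - 1‖ * ‖s - 2‖ * ‖chi s‖ * ‖chi (3 * s)‖
      ≤ 2 * ‖s - 1‖ * (1 / 3 * ‖3 * s - 2‖) * (0.6 * ‖chi (s + 1)‖) * ‖chi (3 * s)‖ := by
        rw [norm_ofNat]; gcongr
    _ = 0.25 * (‖s - 1‖ * ‖3 * s - 2‖ * 1.6 * ‖chi (s + 1)‖ * ‖chi (3 * s)‖) := by ring
    _ ≤ 0.25 * (‖s - 1‖ * ‖3 * s - 2‖ * ‖A * s - A + 1‖ * ‖chi (s + 1)‖ * ‖chi (3 * s)‖) := by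
        gcongr; linarith

theorem norm_f1Term₁_one_sub_le {s : ℂ} (hs : 20 ≤ s.re) :
    ‖f1Term₁ (1 - s)‖ ≤ 0.35 * ‖f1Term₁ s‖ := by
  have h₁ := norm_le_mul_norm_sub_one hs
  have h₂ : ‖3 * s - 1‖ ≤ 1.1 * ‖3 * s - 2‖ :=
    norm_le_mul_norm_of_normSq_le (by norm_num) (by simp [normSq_apply]; nlinarith)
  have h₃ := norm_one_sub_A_mul_le hs
  have h₄ := norm_chi_le_norm_chi_add_two (w := s - 1) (by simp; linarith)
  rw [show s - 1 + 2 = s + 1 by ring] at h₄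
  have h₅ : ‖chi (3 * s - 2)‖ ≤ 0.36 * ‖chi (3 * s)‖ := by
    simpa using norm_chi_le_norm_chi_add_two (w := 3 * s - 2) (by simp; linarith)
  rw [f1Term₁_one_sub]
  simp only [f1Term₁, norm_mul]
  calc ‖s‖ * ‖3 * s - 1‖ * ‖1 - A * s‖ * ‖chi (s - 1)‖ * ‖chi (3 * s - 2)‖
      ≤ 1.1 * ‖s - 1‖ * (1.1 * ‖3 * s - 2‖) * (2.06 * ‖A * s - A + 1‖)
          * (0.36 * ‖chi (s + 1)‖) * (0.36 * ‖chi (3 * s)‖) := by gcongr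
    _ = (1.1 * 1.1 * 2.06 * 0.36 * 0.36)
          * (‖s - 1‖ * ‖3 * s - 2‖ * ‖A * s - A + 1‖ * ‖chi (s + 1)‖ * ‖chi (3 * s)‖) := by ring
    _ ≤ 0.35 * (‖s - 1‖ * ‖3 * s - 2‖ * ‖A * s - A + 1‖ * ‖chi (s + 1)‖ * ‖chi (3 * s)‖) := by
        gcongr; norm_num

theorem norm_f1Term₃_one_sub_le {s : ℂ} (hs : 20 ≤ s.re) :
    ‖f1Term₃ (1 - s)‖ ≤ 0.15 * ‖f1Term₁ s‖ := by
  have h₁ := norm_le_mul_norm_sub_one hs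
  have h₂ : ‖s + 1‖ ≤ 0.4 * ‖3 * s - 2‖ :=
    norm_le_mul_norm_of_normSq_le (by norm_num) (by simp [normSq_apply]; nlinarith)
  have h₃ := norm_chi_le_norm_chi_add_one (w := s) (by linarith)
  have h₄ : ‖chi (3 * s - 2)‖ ≤ 0.36 * ‖chi (3 * s)‖ := by
    simpa using norm_chi_le_norm_chi_add_two (w := 3 * s - 2) (by simp; linarith)
  have hA := le_norm_A_mul_sub_add_one hs
  rw [f1Term₃_one_sub]
  simp only [f1Term₁, norm_mul]
  calc ‖(2 : ℂ)‖ * ‖s‖ * ‖s + 1‖ * ‖chi s‖ * ‖chi (3 * s - 2)‖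
      ≤ 2 * (1.1 * ‖s - 1‖) * (0.4 * ‖3 * s - 2‖) * (0.6 * ‖chi (s + 1)‖)
          * (0.36 * ‖chi (3 * s)‖) := by rw [norm_ofNat]; gcongr
    _ = 0.15 * (‖s - 1‖ * ‖3 * s - 2‖ * 1.2672 * ‖chi (s + 1)‖ * ‖chi (3 * s)‖) := by ring
    _ ≤ 0.15 * (‖s - 1‖ * ‖3 * s - 2‖ * ‖A * s - A + 1‖ * ‖chi (s + 1)‖ * ‖chi (3 * s)‖) := by
        gcongr; linarith

theorem mul_sub_add_mul_ne_zero {a b x r y : ℂ} {c : ℝ} (ha : a ≠ 0) (hb : ‖b‖ ≤ c * ‖a‖)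
    (h : ‖r‖ + c * ‖y‖ < ‖x‖) : a * (x - r) + b * y ≠ 0 := by
  intro h0
  have ha' : 0 < ‖a‖ := norm_pos_iff.mpr ha
  have hax : a * x = a * r - b * y := by linear_combination h0
  have : ‖a‖ * ‖x‖ ≤ ‖a‖ * (‖r‖ + c * ‖y‖) :=
    calc ‖a‖ * ‖x‖ = ‖a * r - b * y‖ := by rw [← hax, norm_mul]
      _ ≤ ‖a‖ * ‖r‖ + ‖b‖ * ‖y‖ := by rw [← norm_mul, ← norm_mul]; exact norm_sub_le _ _
      _ ≤ ‖a‖ * ‖r‖ + c * ‖a‖ * ‖y‖ := by gcongr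
      _ = ‖a‖ * (‖r‖ + c * ‖y‖) := by ring
  exact (le_of_mul_le_mul_left this ha').not_gt h

theorem norm_chi_two_mul_sub_one_mul_le {s : ℂ} (hs : 20 ≤ s.re) :
    ‖chi (2 * s - 1) * s‖ ≤ 0.66 * ‖chi (2 * s) * (s - 1)‖ := by
  have hχ : ‖chi (2 * s - 1)‖ ≤ 0.6 * ‖chi (2 * s)‖ := by
    simpa using norm_chi_le_norm_chi_add_one (w := 2 * s - 1) (by simp; linarith)
  rw [norm_mul, norm_mul]
  calc ‖chi (2 * s - 1)‖ * ‖s‖ ≤ 0.6 * ‖chi (2 * s)‖ * (1.1 * ‖s - 1‖) := by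
        gcongr; exact norm_le_mul_norm_sub_one hs
    _ = 0.66 * (‖chi (2 * s)‖ * ‖s - 1‖) := by ring

theorem Z1_no_zero_right (s : ℂ) (hs : 20 ≤ s.re) : Z1 s ≠ 0 := by
  have hlead : chi (2 * s) * (s - 1) ≠ 0 :=
    mul_ne_zero (chi_ne_zero_of_one_lt_re (by simp; linarith))
      (fun h => by simp [sub_eq_zero.mp h] at hs)
  rw [Z1_eq]
  refine mul_sub_add_mul_ne_zero hlead (norm_chi_two_mul_sub_one_mul_le hs) ?_
  have hT := norm_pos_iff.mpr (f1Term₁_ne_zero hs)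
  have h₂ := norm_f1Term₂_le hs
  have h₃ := norm_f1Term₃_le hs
  have h₁' := norm_f1Term₁_one_sub_le hs
  have h₃' := norm_f1Term₃_one_sub_le hs
  have hr := norm_add_le (f1Term₂ s) (f1Term₃ s)
  have hy : ‖f1Term₁ (1 - s) - f1Term₂ (1 - s) - f1Term₃ (1 - s)‖
      ≤ ‖f1Term₁ (1 - s)‖ + ‖f1Term₂ s‖ + ‖f1Term₃ (1 - s)‖ := by
    rw [← f1Term₂_one_sub s]
    exact norm_sub_le_of_le (norm_sub_le _ _) le_rfl
  linarith
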